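/- arXiv:1902.11248 — 7 statements merged into one kernel-verified Lean document; each statement's English description precedes it below -/
import Mathlib

section
/- Let A₀ be a real n×n matrix, B a real n×m matrix, and v ∈ ℝⁿ a unit vector that is not an eigenvector of A₀ᵀ. Then for any α ≠ 0, the matrix Ric(αvvᵀ) = -A₀ᵀ(αvvᵀ) - (αvvᵀ)A₀ + α²vvᵀBBᵀvvᵀ is indefinite (it has both a positive and a negative eigenvalue). -/
open Matrix

lemma vecMulVec_mulVec' {n : ℕ} (v w x : Fin n → ℝ) :
    (vecMulVec v w).mulVec x = (w ⬝ᵥ x) • v := by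
  ext i
  simp [mulVec, vecMulVec_apply, dotProduct, Finset.mul_sum, mul_assoc, mul_comm, mul_left_comm]

theorem stmt2 {n m : ℕ} (A₀ : Matrix (Fin n) (Fin n) ℝ) (B : Matrix (Fin n) (Fin m) ℝ)
    (v : Fin n → ℝ) (hv : v ⬝ᵥ v = 1)
    (hnoteig : ∀ c : ℝ, A₀ᵀ.mulVec v ≠ c • v)
    (α : ℝ) (hα : α ≠ 0) :
    let X : Matrix (Fin n) (Fin n) ℝ := α • vecMulVec v v
    let Ric : Matrix (Fin n) (Fin n) ℝ := -(A₀ᵀ * X) - X * A₀ + X * (B * Bᵀ) * X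
    ∃ u w : Fin n → ℝ, 0 < u ⬝ᵥ Ric.mulVec u ∧ w ⬝ᵥ Ric.mulVec w < 0 := by
  intro X Ric
  set a : Fin n → ℝ := A₀ᵀ.mulVec v with ha
  set β : ℝ := (Bᵀ.mulVec v) ⬝ᵥ (Bᵀ.mulVec v) with hβ
  have hXmul : ∀ x : Fin n → ℝ, X.mulVec x = (α * (v ⬝ᵥ x)) • v := by
    intro x
    simp [X, smul_mulVec, vecMulVec_mulVec', smul_smul]
  have key : ∀ x : Fin n → ℝ,
      x ⬝ᵥ Ric.mulVec x = -2*α*(v ⬝ᵥ x)*(a ⬝ᵥ x) + α^2*β*(v ⬝ᵥ x)^2 := by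
    intro x
    have h1 : x ⬝ᵥ (A₀ᵀ * X).mulVec x = α * (v ⬝ᵥ x) * (a ⬝ᵥ x) := by
      rw [← mulVec_mulVec, hXmul, mulVec_smul, dotProduct_smul, smul_eq_mul,
        dotProduct_comm x a]
    have h2 : x ⬝ᵥ (X * A₀).mulVec x = α * (v ⬝ᵥ x) * (a ⬝ᵥ x) := by
      rw [← mulVec_mulVec, hXmul, dotProduct_smul, smul_eq_mul]
      have hva : v ⬝ᵥ A₀.mulVec x = a ⬝ᵥ x := by
        rw [dotProduct_mulVec, ha, ← mulVec_transpose]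
      rw [hva, dotProduct_comm x v]
      ring
    have h3 : x ⬝ᵥ (X * (B * Bᵀ) * X).mulVec x = α^2 * β * (v ⬝ᵥ x)^2 := by
      rw [← mulVec_mulVec, hXmul, mulVec_smul, ← mulVec_mulVec, hXmul,
        dotProduct_smul, dotProduct_smul, smul_eq_mul, smul_eq_mul]
      have hvB : v ⬝ᵥ (B * Bᵀ).mulVec v = β := by
        rw [← mulVec_mulVec, dotProduct_mulVec, hβ, ← mulVec_transpose]
      rw [hvB, dotProduct_comm x v]
      ring
    have hRic : x ⬝ᵥ Ric.mulVec x =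
        -(x ⬝ᵥ (A₀ᵀ * X).mulVec x) - x ⬝ᵥ (X * A₀).mulVec x
          + x ⬝ᵥ (X * (B * Bᵀ) * X).mulVec x := by
      simp [Ric, add_mulVec, sub_mulVec, neg_mulVec, dotProduct_add, dotProduct_sub,
        dotProduct_neg]
    rw [hRic, h1, h2, h3]; ring
  -- construct vectors with prescribed dot products
  set p : Fin n → ℝ := a - (a ⬝ᵥ v) • v with hp
  have hvp : v ⬝ᵥ p = 0 := by
    simp [hp, dotProduct_sub, dotProduct_smul, smul_eq_mul, hv, dotProduct_comm v a]
  have hpne : p ≠ 0 := by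
    intro h
    exact hnoteig (a ⬝ᵥ v) (by rwa [hp, sub_eq_zero] at h)
  have hpp : 0 < p ⬝ᵥ p := by
    have hnn : 0 ≤ p ⬝ᵥ p := Finset.sum_nonneg fun i _ => mul_self_nonneg (p i)
    rcases hnn.lt_or_eq with h | h
    · exact h
    · exact absurd ((dotProduct_self_eq_zero).mp h.symm) hpne
  have hap : a ⬝ᵥ p = p ⬝ᵥ p := by
    have hpa : a = p + (a ⬝ᵥ v) • v := by rw [hp]; abel
    rw [hpa, add_dotProduct, smul_dotProduct, smul_eq_mul, hvp]
    ring
  have hxt : ∀ t : ℝ, ∃ x : Fin n → ℝ, v ⬝ᵥ x = 1 ∧ a ⬝ᵥ x = t := by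
    intro t
    refine ⟨v + ((t - a ⬝ᵥ v) / (p ⬝ᵥ p)) • p, ?_, ?_⟩
    · rw [dotProduct_add, dotProduct_smul, smul_eq_mul, hvp, hv]; ring
    · rw [dotProduct_add, dotProduct_smul, smul_eq_mul, hap]
      field_simp
      ring
  obtain ⟨u, hu1, hu2⟩ := hxt ((α^2*β - 1)/(2*α))
  obtain ⟨w, hw1, hw2⟩ := hxt ((α^2*β + 1)/(2*α))
  refine ⟨u, w, ?_, ?_⟩
  · rw [key, hu1, hu2]
    have h : -2*α*((α^2*β - 1)/(2*α)) + α^2*β*(1:ℝ)^2 = 1 := by field_simp; ring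
    linarith [h]
  · rw [key, hw1, hw2]
    have h : -2*α*((α^2*β + 1)/(2*α)) + α^2*β*(1:ℝ)^2 = -1 := by field_simp; ring
    linarith [h]
end

section
/- Let D = [[0, μ], [-μ, 0]] with μ > 0, M ∈ ℝ²ˣ² positive semidefinite, and 𝓛 = [[a, b], [b, c]] symmetric. If M ≠ 0, then -D𝓛 - 𝓛Dᵀ + 𝓛M𝓛 is negative semidefinite only if 𝓛 = 0. Moreover, -D𝓛 - 𝓛Dᵀ = μ[[-2b, a-c], [a-c, 2b]], which is indefinite unless a = c and b = 0. -/
open Matrix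

theorem stmt5 (μ a b c : ℝ) (hμ : 0 < μ)
    (M : Matrix (Fin 2) (Fin 2) ℝ) (hM : M.PosSemidef)
    (D : Matrix (Fin 2) (Fin 2) ℝ) (hD : D = !![0, μ; -μ, 0])
    (𝓛 : Matrix (Fin 2) (Fin 2) ℝ) (h𝓛 : 𝓛 = !![a, b; b, c]) :
    (M ≠ 0 → (-(-(D * 𝓛) - 𝓛 * Dᵀ + 𝓛 * M * 𝓛)).PosSemidef → 𝓛 = 0) ∧
    (-(D * 𝓛) - 𝓛 * Dᵀ = μ • !![-(2 * b), a - c; a - c, 2 * b]) ∧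
    (¬ (a = c ∧ b = 0) →
      ∃ u w : Fin 2 → ℝ,
        0 < u ⬝ᵥ (-(D * 𝓛) - 𝓛 * Dᵀ).mulVec u ∧
        w ⬝ᵥ (-(D * 𝓛) - 𝓛 * Dᵀ).mulVec w < 0) := by
  subst hD h𝓛
  have hsym : M 1 0 = M 0 1 := by
    have := congrFun (congrFun hM.1 1) 0
    simpa [conjTranspose] using this.symm
  have qM : ∀ x y : ℝ, 0 ≤ M 0 0 * x^2 + 2 * M 0 1 * x * y + M 1 1 * y^2 := by
    intro x y
    have h := hM.dotProduct_mulVec_nonneg ![x, y]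
    simp [dotProduct, mulVec, Fin.sum_univ_two] at h
    rw [hsym] at h
    nlinarith [h]
  have hR : -((!![0, μ; -μ, 0] : Matrix (Fin 2) (Fin 2) ℝ) * !![a, b; b, c])
      - !![a, b; b, c] * (!![0, μ; -μ, 0] : Matrix (Fin 2) (Fin 2) ℝ)ᵀ
      = μ • !![-(2 * b), a - c; a - c, 2 * b] := by
    rw [show (!![0, μ; -μ, 0] : Matrix (Fin 2) (Fin 2) ℝ)ᵀ = !![0, -μ; μ, 0] from by
      ext i j; fin_cases i <;> fin_cases j <;> simp]
    ext i j
    fin_cases i <;> fin_cases j <;>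
      (simp [Matrix.mul_apply, Fin.sum_univ_two, Matrix.smul_apply]; ring)
  refine ⟨?_, hR, ?_⟩
  · intro hMne hA
    have qA : ∀ x y : ℝ, 0 ≤
        (2*μ*b - (a^2*M 0 0 + 2*a*b*M 0 1 + b^2*M 1 1)) * x^2
        + (2*μ*(c-a) - 2*(a*b*M 0 0 + (b^2 + a*c)*M 0 1 + b*c*M 1 1)) * x * y
        + (-2*μ*b - (b^2*M 0 0 + 2*b*c*M 0 1 + c^2*M 1 1)) * y^2 := by
      intro x y
      have h := hA.dotProduct_mulVec_nonneg ![x, y]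
      rw [Matrix.eta_fin_two M,
        show (!![0, μ; -μ, 0] : Matrix (Fin 2) (Fin 2) ℝ)ᵀ = !![0, -μ; μ, 0] from by
          ext i j; fin_cases i <;> fin_cases j <;> simp] at h
      simp [dotProduct, mulVec, Fin.sum_univ_two, Matrix.mul_fin_two] at h
      rw [hsym] at h
      linarith [h]
    have key0 : M 0 0 = 0 → M 0 1 = 0 := by
      intro hm00
      by_contra hne
      have hx := qM (-(M 1 1 + 1) / (2 * M 0 1)) 1
      rw [hm00] at hx
      have h2 : 2 * M 0 1 * (-(M 1 1 + 1) / (2 * M 0 1)) = -(M 1 1 + 1) := by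
        field_simp
      nlinarith [hx, h2]
    have key1 : M 1 1 = 0 → M 0 1 = 0 := by
      intro hm11
      by_contra hne
      have hx := qM 1 (-(M 0 0 + 1) / (2 * M 0 1))
      rw [hm11] at hx
      have h2 : 2 * M 0 1 * (-(M 0 0 + 1) / (2 * M 0 1)) = -(M 0 0 + 1) := by
        field_simp
      nlinarith [hx, h2]
    have h10 := qA 1 0
    have h01 := qA 0 1
    have hqab := qM a b
    have hqbc := qM b c
    have hb : b = 0 := by nlinarith
    subst hb
    have hs0 : a^2 * M 0 0 = 0 := by nlinarith
    have hs1 : c^2 * M 1 1 = 0 := by nlinarith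
    have hoff : μ * (c - a) = a * c * M 0 1 := by
      have h1 := qA 1 1
      have h2 := qA 1 (-1)
      nlinarith [h1, h2]
    have ha : a = 0 := by
      by_contra hane
      have hm00 : M 0 0 = 0 := by
        rcases mul_eq_zero.mp hs0 with h | h
        · exact absurd (pow_eq_zero_iff two_ne_zero |>.mp h) hane
        · exact h
      have hm01 : M 0 1 = 0 := key0 hm00
      rw [hm01, mul_zero] at hoff
      rcases mul_eq_zero.mp hoff with h | h
      · exact absurd h (ne_of_gt hμ)
      have hca : c = a := by linarith
      have hcne : c ≠ 0 := hca ▸ hane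
      have hm11 : M 1 1 = 0 := by
        rcases mul_eq_zero.mp hs1 with h' | h'
        · exact absurd (pow_eq_zero_iff two_ne_zero |>.mp h') hcne
        · exact h'
      exact hMne (by ext i j; fin_cases i <;> fin_cases j <;>
        simp [hm00, hm01, hm11, hsym])
    have hc : c = 0 := by
      by_contra hcne
      have hm11 : M 1 1 = 0 := by
        rcases mul_eq_zero.mp hs1 with h' | h'
        · exact absurd (pow_eq_zero_iff two_ne_zero |>.mp h') hcne
        · exact h'
      have hm01 : M 0 1 = 0 := key1 hm11
      rw [hm01, mul_zero] at hoff
      rcases mul_eq_zero.mp hoff with h | h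
      · exact absurd h (ne_of_gt hμ)
      have hca : a = c := by linarith
      have hane : a ≠ 0 := hca ▸ hcne
      have hm00 : M 0 0 = 0 := by
        rcases mul_eq_zero.mp hs0 with h' | h'
        · exact absurd (pow_eq_zero_iff two_ne_zero |>.mp h') hane
        · exact h'
      exact hMne (by ext i j; fin_cases i <;> fin_cases j <;>
        simp [hm00, hm01, hm11, hsym])
    ext i j
    fin_cases i <;> fin_cases j <;> simp [ha, hc]
  · intro hnac
    have hval : ∀ x y : ℝ,
        ![x, y] ⬝ᵥ (-((!![0, μ; -μ, 0] : Matrix (Fin 2) (Fin 2) ℝ) * !![a, b; b, c])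
          - !![a, b; b, c] * (!![0, μ; -μ, 0] : Matrix (Fin 2) (Fin 2) ℝ)ᵀ).mulVec ![x, y]
        = μ * (-2*b*x^2 + 2*(a-c)*x*y + 2*b*y^2) := by
      intro x y
      rw [hR]
      simp [dotProduct, mulVec, Fin.sum_univ_two, Matrix.smul_apply]
      ring
    by_cases hb : b = 0
    · subst hb
      have hac : a ≠ c := fun h => hnac ⟨h, rfl⟩
      rcases lt_or_gt_of_ne hac with h | h
      · exact ⟨![1, -1], ![1, 1], by rw [hval 1 (-1)]; nlinarith, by rw [hval 1 1]; nlinarith⟩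
      · exact ⟨![1, 1], ![1, -1], by rw [hval 1 1]; nlinarith, by rw [hval 1 (-1)]; nlinarith⟩
    · rcases lt_or_gt_of_ne hb with h | h
      · exact ⟨![1, 0], ![0, 1], by rw [hval 1 0]; nlinarith, by rw [hval 0 1]; nlinarith⟩
      · exact ⟨![0, 1], ![1, 0], by rw [hval 0 1]; nlinarith, by rw [hval 1 0]; nlinarith⟩
end

section
/- Let D ∈ ℝᵏˣᵏ have all eigenvalues in the open right half plane, let M ∈ ℝᵏˣᵏ be symmetric positive semidefinite, and let 𝓛* be an invertible symmetric solution of -D𝓛 - 𝓛Dᵀ + 𝓛M𝓛 = 0. Then every invertible symmetric 𝓛̂ satisfying -D𝓛̂ - 𝓛̂Dᵀ + 𝓛̂M𝓛̂ ≤ 0 satisfies 0 ≤ 𝓛̂ ≤ 𝓛*. -/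
open Matrix

open NormedSpace Filter
open scoped ENNReal NNReal Topology

section LyapunovAux
attribute [local instance] Matrix.linftyOpNormedAddCommGroup Matrix.linftyOpNormedRing Matrix.linftyOpNormedAlgebra


noncomputable def cmap {k : ℕ} : Matrix (Fin k) (Fin k) ℝ →ₐ[ℝ] Matrix (Fin k) (Fin k) ℂ :=
  AlgHom.mapMatrix (Algebra.ofId ℝ ℂ)

lemma cmap_apply {k : ℕ} (B : Matrix (Fin k) (Fin k) ℝ) :
    cmap B = B.map (algebraMap ℝ ℂ) := rfl

lemma cmap_continuous {k : ℕ} : Continuous (cmap (k := k)) := by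
  apply continuous_matrix
  intro i j
  exact Complex.continuous_ofReal.comp ((continuous_apply j).comp (continuous_apply i))

lemma cmap_exp {k : ℕ} (B : Matrix (Fin k) (Fin k) ℝ) :
    cmap (exp B) = exp (cmap B) := by
  exact map_exp cmap cmap_continuous B

lemma cmap_norm {k : ℕ} (B : Matrix (Fin k) (Fin k) ℝ) : ‖cmap B‖ = ‖B‖ := by
  rw [Matrix.linfty_opNorm_def, Matrix.linfty_opNorm_def]
  congr 1
  ext i
  congr 1
  ext j
  simp [cmap_apply, Matrix.map_apply, Complex.norm_real]

/-- mulVec by a fixed vector, as a linear map in the matrix. -/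
noncomputable def mulVecCLM {k : ℕ} (w : Fin k → ℂ) :
    Matrix (Fin k) (Fin k) ℂ →L[ℂ] (Fin k → ℂ) :=
  LinearMap.toContinuousLinearMap
    { toFun := fun X => X *ᵥ w
      map_add' := fun X Y => Matrix.add_mulVec X Y w
      map_smul' := fun c X => by simp [Matrix.smul_mulVec] }

lemma exp_mulVec_eigen {k : ℕ} (A : Matrix (Fin k) (Fin k) ℂ) (w : Fin k → ℂ) (μ : ℂ)
    (h : A *ᵥ w = μ • w) : exp A *ᵥ w = Complex.exp μ • w := by
  have hpow : ∀ n : ℕ, A ^ n *ᵥ w = μ ^ n • w := by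
    intro n
    induction n with
    | zero => simp
    | succ n ih =>
      rw [pow_succ', pow_succ']
      rw [← Matrix.mulVec_mulVec, ih]
      simp [Matrix.mulVec_smul, h, smul_smul, mul_comm]
  have hs : Summable fun n : ℕ => ((n.factorial : ℂ)⁻¹) • A ^ n := expSeries_summable' A
  have := (mulVecCLM w).map_tsum hs
  have hexp : exp A *ᵥ w = ∑' n : ℕ, ((n.factorial : ℂ)⁻¹) • (A ^ n *ᵥ w) := by
    rw [exp_eq_tsum ℂ]
    calc (∑' n : ℕ, ((n.factorial : ℂ)⁻¹) • A ^ n) *ᵥ w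
        = mulVecCLM w (∑' n : ℕ, ((n.factorial : ℂ)⁻¹) • A ^ n) := rfl
      _ = ∑' n : ℕ, mulVecCLM w (((n.factorial : ℂ)⁻¹) • A ^ n) := this
      _ = ∑' n : ℕ, ((n.factorial : ℂ)⁻¹) • (A ^ n *ᵥ w) := by
          refine tsum_congr fun n => ?_
          simp [mulVecCLM, Matrix.smul_mulVec]
  rw [hexp]
  have : ∀ n : ℕ, ((n.factorial : ℂ)⁻¹) • (A ^ n *ᵥ w) = (((n.factorial : ℂ)⁻¹) * μ ^ n) • w := by
    intro n; rw [hpow n, smul_smul]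
  rw [tsum_congr this, Summable.tsum_smul_const]
  · congr 1
    rw [Complex.exp_eq_exp_ℂ, exp_eq_tsum ℂ]
    simp [smul_eq_mul]
  · simpa [smul_eq_mul] using expSeries_summable' (𝕂 := ℂ) μ

lemma matrix_mem_spectrum_iff {k : ℕ} (M : Matrix (Fin k) (Fin k) ℂ) (μ : ℂ) :
    μ ∈ spectrum ℂ M ↔ ∃ v, v ≠ 0 ∧ M *ᵥ v = μ • v := by
  rw [spectrum.mem_iff, Matrix.isUnit_iff_isUnit_det, isUnit_iff_ne_zero, not_not,
    ← Matrix.exists_mulVec_eq_zero_iff]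
  constructor
  · rintro ⟨v, hv, h⟩
    refine ⟨v, hv, ?_⟩
    have : (algebraMap ℂ (Matrix (Fin k) (Fin k) ℂ) μ - M) *ᵥ v = μ • v - M *ᵥ v := by
      rw [Matrix.sub_mulVec]
      congr 1
      simp [Algebra.algebraMap_eq_smul_one, Matrix.smul_mulVec]
    rw [this] at h
    rw [sub_eq_zero] at h; exact h.symm
  · rintro ⟨v, hv, h⟩
    refine ⟨v, hv, ?_⟩
    rw [Matrix.sub_mulVec]
    have : algebraMap ℂ (Matrix (Fin k) (Fin k) ℂ) μ *ᵥ v = μ • v := by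
      simp [Algebra.algebraMap_eq_smul_one, Matrix.smul_mulVec]
    rw [this, h, sub_self]

lemma spectrum_exp_subset {k : ℕ} (A : Matrix (Fin k) (Fin k) ℂ) (ν : ℂ)
    (hν : ν ∈ spectrum ℂ (exp A)) : ∃ μ ∈ spectrum ℂ A, ν = Complex.exp μ := by
  obtain ⟨v, hv0, hv⟩ := (matrix_mem_spectrum_iff _ ν).mp hν
  -- the eigenspace of exp A for ν, as a submodule
  set f : Module.End ℂ (Fin k → ℂ) := Matrix.mulVecLin (exp A)
  set W : Submodule ℂ (Fin k → ℂ) := Module.End.eigenspace f ν with hW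
  have hvW : v ∈ W := by
    rw [hW, Module.End.mem_eigenspace_iff]
    simpa [f, Matrix.mulVecLin_apply] using hv
  have hcomm : A * exp A = exp A * A := ((Commute.refl A).exp_right).eq
  have hmaps : ∀ x ∈ W, Matrix.mulVecLin A x ∈ W := by
    intro x hx
    rw [hW, Module.End.mem_eigenspace_iff] at hx ⊢
    simp only [f, Matrix.mulVecLin_apply] at hx ⊢
    rw [Matrix.mulVec_mulVec, ← hcomm, ← Matrix.mulVec_mulVec, hx, Matrix.mulVec_smul]
  haveI : Nontrivial W := ⟨⟨⟨v, hvW⟩, 0, Subtype.coe_ne_coe.mp (by simpa using hv0)⟩⟩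
  set g : Module.End ℂ W := (Matrix.mulVecLin A).restrict hmaps
  obtain ⟨μ, hμ⟩ := Module.End.exists_eigenvalue g
  obtain ⟨w, hw⟩ := hμ.exists_hasEigenvector
  have hw0 : (w : Fin k → ℂ) ≠ 0 := fun h => hw.right (by exact_mod_cast Subtype.coe_injective (by simpa using h))
  have hgw : A *ᵥ (w : Fin k → ℂ) = μ • (w : Fin k → ℂ) := by
    have := hw.apply_eq_smul
    have h2 : ((g w : W) : Fin k → ℂ) = μ • (w : Fin k → ℂ) := by rw [this]; rfl
    rw [← h2]
    rfl
  refine ⟨μ, (matrix_mem_spectrum_iff _ μ).mpr ⟨w, hw0, hgw⟩, ?_⟩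
  have h1 : exp A *ᵥ (w : Fin k → ℂ) = Complex.exp μ • (w : Fin k → ℂ) :=
    exp_mulVec_eigen A w μ hgw
  have h2 : exp A *ᵥ (w : Fin k → ℂ) = ν • (w : Fin k → ℂ) := by
    have h3 := Module.End.mem_eigenspace_iff.mp w.2
    simpa [f, Matrix.mulVecLin_apply] using h3
  obtain ⟨i, hi⟩ := Function.ne_iff.mp hw0
  have := congrFun (h1.symm.trans h2) i
  simp only [Pi.smul_apply, smul_eq_mul] at this
  exact (mul_right_cancel₀ hi this).symm

lemma pow_tendsto_zero_of_spectrum {k : ℕ} (E : Matrix (Fin k) (Fin k) ℂ)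
    (hE : ∀ ν ∈ spectrum ℂ E, ‖ν‖₊ < 1) :
    Tendsto (fun n : ℕ => E ^ n) atTop (𝓝 0) := by
  rcases Nat.eq_zero_or_pos k with hk | hk
  · subst hk
    have : ∀ n : ℕ, E ^ n = 0 := fun n => Subsingleton.elim _ _
    simpa [this] using tendsto_const_nhds
  haveI : Nontrivial (Matrix (Fin k) (Fin k) ℂ) := by
    refine ⟨1, 0, fun h => one_ne_zero (α := ℂ) ?_⟩
    have := congrFun (congrFun h ⟨0, hk⟩) ⟨0, hk⟩
    simpa using this
  have hr : spectralRadius ℂ E < (1 : ℝ≥0) := spectrum.spectralRadius_lt_of_forall_lt E hE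
  obtain ⟨c, hc1, hc2⟩ := exists_between hr
  have hcne : c ≠ ⊤ := (hc2.trans_le le_top).ne
  have hglf := spectrum.pow_nnnorm_pow_one_div_tendsto_nhds_spectralRadius E
  have hev : ∀ᶠ n : ℕ in atTop, (‖E ^ n‖₊ : ℝ≥0∞) ^ (1 / (n : ℝ)) < c :=
    hglf.eventually_lt_const hc1
  have hlt1 : c.toReal < 1 := by
    have := (ENNReal.toReal_lt_toReal hcne ENNReal.coe_ne_top).mpr hc2
    simpa using this
  have key : ∀ᶠ n : ℕ in atTop, ‖E ^ n‖ ≤ c.toReal ^ n := by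
    filter_upwards [hev, eventually_ge_atTop 1] with n hn hn1
    have hne : (n : ℝ) ≠ 0 := by positivity
    have h1 := ENNReal.rpow_le_rpow hn.le (by positivity : (0:ℝ) ≤ (n : ℝ))
    rw [← ENNReal.rpow_mul, one_div, inv_mul_cancel₀ hne, ENNReal.rpow_one,
      ENNReal.rpow_natCast] at h1
    have h2 := ENNReal.toReal_mono (by simp [hcne]) h1
    rw [ENNReal.toReal_pow] at h2
    simpa using h2
  have hgeo : Tendsto (fun n : ℕ => c.toReal ^ n) atTop (𝓝 0) :=
    tendsto_pow_atTop_nhds_zero_of_lt_one ENNReal.toReal_nonneg hlt1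
  exact tendsto_zero_iff_norm_tendsto_zero.mpr
    (squeeze_zero' (Eventually.of_forall fun n => norm_nonneg _) key hgeo)

lemma exp_neg_tendsto_zero {k : ℕ} (D : Matrix (Fin k) (Fin k) ℝ)
    (hD : ∀ μ ∈ spectrum ℂ (D.map (algebraMap ℝ ℂ)), 0 < μ.re) :
    Tendsto (fun t : ℝ => exp (t • (-D))) atTop (𝓝 0) := by
  set Ac : Matrix (Fin k) (Fin k) ℂ := cmap (-D) with hAc
  have hAcneg : Ac = -(D.map (algebraMap ℝ ℂ)) := by
    ext i j
    simp [hAc, cmap, Algebra.ofId_apply]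
  set E : Matrix (Fin k) (Fin k) ℂ := exp Ac with hE
  have hspec : ∀ ν ∈ spectrum ℂ E, ‖ν‖₊ < 1 := by
    intro ν hν
    obtain ⟨μ, hμ, rfl⟩ := spectrum_exp_subset Ac ν hν
    have hneg : -μ ∈ spectrum ℂ (D.map (algebraMap ℝ ℂ)) := by
      rw [hAcneg] at hμ
      rw [← spectrum.neg_eq] at hμ
      simpa using hμ
    have hre : μ.re < 0 := by
      have := hD _ hneg
      simp only [Complex.neg_re] at this
      linarith
    have : ‖Complex.exp μ‖ < 1 := by
      rw [Complex.norm_exp]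
      exact Real.exp_lt_one_iff.mpr hre
    exact_mod_cast this
  have hpow : Tendsto (fun n : ℕ => E ^ n) atTop (𝓝 0) := pow_tendsto_zero_of_spectrum E hspec
  -- bound on [0,1]
  have hcont : Continuous fun s : ℝ => exp (s • Ac) :=
    exp_continuous.comp (continuous_id.smul continuous_const)
  obtain ⟨C, hC⟩ := (isCompact_Icc (a := (0:ℝ)) (b := 1)).exists_bound_of_continuousOn
    hcont.continuousOn
  have hC0 : 0 ≤ C := le_trans (norm_nonneg _) (hC 0 ⟨le_refl _, zero_le_one⟩)
  -- key bound
  have key : ∀ t : ℝ, 0 ≤ t → ‖exp (t • (-D))‖ ≤ C * ‖E ^ (⌊t⌋₊)‖ := by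
    intro t ht
    have hnorm : ‖exp (t • (-D))‖ = ‖exp (t • Ac)‖ := by
      rw [← cmap_norm, cmap_exp]
      congr 2
      exact map_smul cmap t (-D)
    rw [hnorm]
    have hsplit : t • Ac = (t - (⌊t⌋₊ : ℝ)) • Ac + ((⌊t⌋₊ : ℕ) : ℝ) • Ac := by
      rw [← add_smul]; ring_nf
    have hcomm : Commute ((t - (⌊t⌋₊ : ℝ)) • Ac) (((⌊t⌋₊ : ℕ) : ℝ) • Ac) :=
      ((Commute.refl Ac).smul_left _).smul_right _
    rw [hsplit, Matrix.exp_add_of_commute _ _ hcomm]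
    have h2 : exp (((⌊t⌋₊ : ℕ) : ℝ) • Ac) = E ^ (⌊t⌋₊) := by
      rw [Nat.cast_smul_eq_nsmul, Matrix.exp_nsmul]
    rw [h2]
    calc ‖exp ((t - (⌊t⌋₊ : ℝ)) • Ac) * E ^ ⌊t⌋₊‖
        ≤ ‖exp ((t - (⌊t⌋₊ : ℝ)) • Ac)‖ * ‖E ^ ⌊t⌋₊‖ := norm_mul_le _ _
      _ ≤ C * ‖E ^ ⌊t⌋₊‖ := by
          apply mul_le_mul_of_nonneg_right _ (norm_nonneg _)
          exact hC _ ⟨by simpa using Nat.floor_le ht, by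
            have := (Nat.lt_floor_add_one t).le
            linarith⟩
  have hlim : Tendsto (fun t : ℝ => C * ‖E ^ (⌊t⌋₊)‖) atTop (𝓝 0) := by
    have h1 : Tendsto (fun n : ℕ => ‖E ^ n‖) atTop (𝓝 0) := by
      simpa using hpow.norm
    have h2 := h1.comp (tendsto_nat_floor_atTop (α := ℝ))
    simpa using (h2.const_mul C)
  refine tendsto_zero_iff_norm_tendsto_zero.mpr ?_
  apply squeeze_zero' (Eventually.of_forall fun t => norm_nonneg _)
    (eventually_atTop.mpr ⟨0, fun t ht => key t ht⟩) hlim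

/-- quadratic form evaluation as a continuous linear map in the matrix -/
noncomputable def quadCLM {k : ℕ} (v : Fin k → ℝ) :
    Matrix (Fin k) (Fin k) ℝ →L[ℝ] ℝ :=
  LinearMap.toContinuousLinearMap
    { toFun := fun X => v ⬝ᵥ (X *ᵥ v)
      map_add' := fun X Y => by simp [Matrix.add_mulVec, dotProduct_add]
      map_smul' := fun c X => by simp [Matrix.smul_mulVec, dotProduct_smul] }

lemma lyapunov_psd {k : ℕ} (D Y : Matrix (Fin k) (Fin k) ℝ)
    (hD : ∀ μ ∈ spectrum ℂ (D.map (algebraMap ℝ ℂ)), 0 < μ.re)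
    (hY : Y.IsSymm) (hQ : (Dᵀ * Y + Y * D).PosSemidef) : Y.PosSemidef := by
  set A : Matrix (Fin k) (Fin k) ℝ := -D with hA
  set Q : Matrix (Fin k) (Fin k) ℝ := Dᵀ * Y + Y * D with hQdef
  refine Matrix.posSemidef_iff_dotProduct_mulVec.mpr ⟨?_, ?_⟩
  · rw [Matrix.IsHermitian, Matrix.conjTranspose_eq_transpose_of_trivial]
    exact hY
  intro v
  set F : ℝ → Matrix (Fin k) (Fin k) ℝ := fun t => exp (t • Aᵀ) * (Y * exp (t • A)) with hF
  set g : ℝ → ℝ := fun t => quadCLM v (F t) with hg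
  -- derivative of F
  have hFderiv : ∀ t : ℝ, HasDerivAt F (-(((exp (t • A))ᵀ) * Q * exp (t • A))) t := by
    intro t
    have h1 : HasDerivAt (fun u : ℝ => exp (u • Aᵀ)) (Aᵀ * exp (t • Aᵀ)) t :=
      hasDerivAt_exp_smul_const' Aᵀ t
    have h2 : HasDerivAt (fun u : ℝ => Y * exp (u • A)) (Y * (exp (t • A) * A)) t :=
      (hasDerivAt_exp_smul_const A t).const_mul Y
    have h3 := h1.mul h2
    refine h3.congr_deriv ?_
    have hT : exp (t • Aᵀ) = (exp (t • A))ᵀ := by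
      rw [← Matrix.transpose_smul, Matrix.exp_transpose]
    have hBA : exp (t • A) * A = A * exp (t • A) :=
      (((Commute.refl A).smul_left t).exp_left).eq
    set B := exp (t • A) with hB
    have hABT : Aᵀ * Bᵀ = Bᵀ * Aᵀ := by
      have := congrArg Matrix.transpose hBA
      rw [Matrix.transpose_mul, Matrix.transpose_mul] at this
      exact this
    rw [hT, hBA, hABT]
    simp only [hQdef, hA, Matrix.transpose_neg]
    noncomm_ring
  have hgderiv : ∀ t : ℝ, HasDerivAt g
      (-((exp (t • A) *ᵥ v) ⬝ᵥ (Q *ᵥ (exp (t • A) *ᵥ v)))) t := by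
    intro t
    have := ((quadCLM v).hasFDerivAt.comp_hasDerivAt t (hFderiv t))
    refine this.congr_deriv (Eq.symm ?_)
    set B := exp (t • A)
    show -((B *ᵥ v) ⬝ᵥ (Q *ᵥ (B *ᵥ v))) = quadCLM v (-(Bᵀ * Q * B))
    have : quadCLM v (-(Bᵀ * Q * B)) = -(v ⬝ᵥ ((Bᵀ * Q * B) *ᵥ v)) := by
      rw [map_neg]; rfl
    rw [this]
    congr 1
    rw [← Matrix.mulVec_mulVec, ← Matrix.mulVec_mulVec, Matrix.dotProduct_mulVec v Bᵀ,
      Matrix.vecMul_transpose]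
  -- g is antitone
  have hganti : Antitone g := by
    apply antitone_of_deriv_nonpos
    · intro t; exact (hgderiv t).differentiableAt
    · intro t
      rw [(hgderiv t).deriv]
      have := hQ.dotProduct_mulVec_nonneg (exp (t • A) *ᵥ v)
      simp only [star_trivial] at this
      linarith
  -- g tends to 0
  have hFlim : Tendsto F atTop (𝓝 0) := by
    have h1 : Tendsto (fun t : ℝ => exp (t • A)) atTop (𝓝 0) := exp_neg_tendsto_zero D hD
    have h2 : Tendsto (fun t : ℝ => exp (t • Aᵀ)) atTop (𝓝 0) := by
      have hTc : Continuous fun X : Matrix (Fin k) (Fin k) ℝ => Xᵀ :=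
        Continuous.matrix_transpose continuous_id
      have h2' := (hTc.tendsto 0).comp h1
      simp only [Matrix.transpose_zero, Function.comp_def] at h2'
      have heq : (fun t : ℝ => exp (t • Aᵀ)) = fun t : ℝ => (exp (t • A))ᵀ := by
        funext t; rw [← Matrix.transpose_smul, Matrix.exp_transpose]
      rw [heq]
      exact h2'
    have := h2.mul ((tendsto_const_nhds (x := Y)).mul h1)
    simpa using this
  have hglim : Tendsto g atTop (𝓝 0) := by
    have := ((quadCLM v).continuous.tendsto 0).comp hFlim
    simpa [hg, Function.comp_def] using this
  -- conclude
  have h0 : (0:ℝ) ≤ g 0 := by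
    apply le_of_tendsto hglim
    filter_upwards [eventually_ge_atTop (0:ℝ)] with t ht
    exact hganti ht
  have : g 0 = v ⬝ᵥ (Y *ᵥ v) := by
    simp [hg, hF, quadCLM]
  rw [star_trivial]
  rw [← this]
  exact h0

lemma dot_symm {k : ℕ} (S : Matrix (Fin k) (Fin k) ℝ) (hS : Sᵀ = S) (a b : Fin k → ℝ) :
    a ⬝ᵥ (S *ᵥ b) = (S *ᵥ a) ⬝ᵥ b := by
  rw [dotProduct_mulVec, ← Matrix.vecMul_transpose, hS]

lemma inv_psd {k : ℕ} (Y : Matrix (Fin k) (Fin k) ℝ) (hY : Y.IsSymm)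
    (hYinv : IsUnit Y.det) (hYpsd : Y.PosSemidef) : Y⁻¹.PosSemidef := by
  refine Matrix.posSemidef_iff_dotProduct_mulVec.mpr ⟨?_, ?_⟩
  · rw [Matrix.IsHermitian, Matrix.conjTranspose_eq_transpose_of_trivial,
      Matrix.transpose_nonsing_inv, hY.eq]
  intro x
  set y := Y⁻¹ *ᵥ x with hy
  have hx : Y *ᵥ y = x := by
    rw [hy, Matrix.mulVec_mulVec, Matrix.mul_nonsing_inv Y hYinv, Matrix.one_mulVec]
  have : star x ⬝ᵥ (Y⁻¹ *ᵥ x) = star y ⬝ᵥ (Y *ᵥ y) := by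
    simp only [star_trivial]
    rw [dot_symm Y hY.eq y y, hx, ← hy, dotProduct_comm]
  rw [this]
  exact hYpsd.dotProduct_mulVec_nonneg y

lemma inv_antitone {k : ℕ} (A B : Matrix (Fin k) (Fin k) ℝ)
    (hA : A.IsSymm) (hB : B.IsSymm) (hAinv : IsUnit A.det) (hBinv : IsUnit B.det)
    (hBpsd : B.PosSemidef) (hAB : (A - B).PosSemidef) : (B⁻¹ - A⁻¹).PosSemidef := by
  refine Matrix.posSemidef_iff_dotProduct_mulVec.mpr ⟨?_, ?_⟩
  · rw [Matrix.IsHermitian, Matrix.conjTranspose_eq_transpose_of_trivial,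
      Matrix.transpose_sub, Matrix.transpose_nonsing_inv, Matrix.transpose_nonsing_inv,
      hA.eq, hB.eq]
  intro x
  simp only [star_trivial]
  set y := A⁻¹ *ᵥ x with hy
  set u := B⁻¹ *ᵥ x with hu
  have hAy : A *ᵥ y = x := by
    rw [hy, Matrix.mulVec_mulVec, Matrix.mul_nonsing_inv A hAinv, Matrix.one_mulVec]
  have hBu : B *ᵥ u = x := by
    rw [hu, Matrix.mulVec_mulVec, Matrix.mul_nonsing_inv B hBinv, Matrix.one_mulVec]
  have key : x ⬝ᵥ ((B⁻¹ - A⁻¹) *ᵥ x)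
      = (y - u) ⬝ᵥ (B *ᵥ (y - u)) + y ⬝ᵥ ((A - B) *ᵥ y) := by
    have e1 : (y - u) ⬝ᵥ (B *ᵥ (y - u))
        = y ⬝ᵥ (B *ᵥ y) - y ⬝ᵥ x - u ⬝ᵥ (B *ᵥ y) + u ⬝ᵥ x := by
      rw [Matrix.mulVec_sub, hBu]
      simp only [sub_dotProduct, dotProduct_sub]
      ring
    have e2 : u ⬝ᵥ (B *ᵥ y) = x ⬝ᵥ y := by
      rw [dot_symm B hB.eq u y, hBu]
    have e3 : y ⬝ᵥ ((A - B) *ᵥ y) = y ⬝ᵥ x - y ⬝ᵥ (B *ᵥ y) := by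
      rw [Matrix.sub_mulVec, dotProduct_sub, hAy]
    rw [e1, e2, e3, Matrix.sub_mulVec, dotProduct_sub, ← hy, ← hu]
    rw [dotProduct_comm x y, dotProduct_comm u x, dotProduct_comm x u]
    ring
  rw [key]
  have h1 := hBpsd.dotProduct_mulVec_nonneg (y - u)
  have h2 := hAB.dotProduct_mulVec_nonneg y
  simp only [star_trivial] at h1 h2
  linarith

lemma sandwich {k : ℕ} (D M L : Matrix (Fin k) (Fin k) ℝ) (hLinv : IsUnit L.det) :
    L⁻¹ * (D * L + L * Dᵀ - L * M * L) * L⁻¹ = L⁻¹ * D + Dᵀ * L⁻¹ - M := by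
  have hYL : L⁻¹ * L = 1 := Matrix.nonsing_inv_mul _ hLinv
  have hLY : L * L⁻¹ = 1 := Matrix.mul_nonsing_inv _ hLinv
  have t1 : L⁻¹ * (D * L) * L⁻¹ = L⁻¹ * D := by
    rw [← Matrix.mul_assoc L⁻¹ D L, Matrix.mul_assoc (L⁻¹ * D) L L⁻¹, hLY, mul_one]
  have t2 : L⁻¹ * (L * Dᵀ) * L⁻¹ = Dᵀ * L⁻¹ := by
    rw [← Matrix.mul_assoc L⁻¹ L Dᵀ, hYL, one_mul]
  have t3 : L⁻¹ * (L * M * L) * L⁻¹ = M := by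
    rw [← Matrix.mul_assoc L⁻¹ (L * M) L, ← Matrix.mul_assoc L⁻¹ L M, hYL, one_mul,
      Matrix.mul_assoc M L L⁻¹, hLY, mul_one]
  simp only [Matrix.mul_add, Matrix.mul_sub, Matrix.add_mul, Matrix.sub_mul]
  rw [t1, t2, t3]

theorem stmt10 {k : ℕ} (D M Lstar Lhat : Matrix (Fin k) (Fin k) ℝ)
    (hD : ∀ μ ∈ spectrum ℂ (D.map (algebraMap ℝ ℂ)), 0 < μ.re)
    (hMs : M.IsSymm) (hMpsd : M.PosSemidef)
    (hLs : Lstar.IsSymm) (hLsinv : IsUnit Lstar.det)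
    (heq : -(D * Lstar) - Lstar * Dᵀ + Lstar * M * Lstar = 0)
    (hLh : Lhat.IsSymm) (hLhinv : IsUnit Lhat.det)
    (hineq : (-(-(D * Lhat) - Lhat * Dᵀ + Lhat * M * Lhat)).PosSemidef) :
    Lhat.PosSemidef ∧ (Lstar - Lhat).PosSemidef := by
  set Yh := Lhat⁻¹ with hYh
  set Ys := Lstar⁻¹ with hYs
  have hYhsymm : Yh.IsSymm := by
    rw [Matrix.IsSymm, hYh, Matrix.transpose_nonsing_inv, hLh.eq]
  have hYssymm : Ys.IsSymm := by
    rw [Matrix.IsSymm, hYs, Matrix.transpose_nonsing_inv, hLs.eq]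
  have hYhdet : IsUnit Yh.det := Matrix.isUnit_nonsing_inv_det _ hLhinv
  have hYsdet : IsUnit Ys.det := Matrix.isUnit_nonsing_inv_det _ hLsinv
  -- Lhat side : congruence of the Riccati inequality
  have hP : (D * Lhat + Lhat * Dᵀ - Lhat * M * Lhat).PosSemidef := by
    have h : D * Lhat + Lhat * Dᵀ - Lhat * M * Lhat
        = -(-(D * Lhat) - Lhat * Dᵀ + Lhat * M * Lhat) := by abel
    rw [h]; exact hineq
  have hcong := hP.conjTranspose_mul_mul_same Yh
  have hYhH : Yhᴴ = Yh := by
    rw [Matrix.conjTranspose_eq_transpose_of_trivial, hYhsymm.eq]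
  rw [hYhH, hYh, sandwich D M Lhat hLhinv] at hcong
  have hQh : (Dᵀ * Yh + Yh * D).PosSemidef := by
    have h2 := hcong.add hMpsd
    have h : Lhat⁻¹ * D + Dᵀ * Lhat⁻¹ - M + M = Dᵀ * Yh + Yh * D := by
      rw [← hYh]; abel
    rwa [h] at h2
  have hYhpsd := lyapunov_psd D Yh hD hYhsymm hQh
  -- Lstar side : the Riccati equation
  have hzero : D * Lstar + Lstar * Dᵀ - Lstar * M * Lstar = 0 := by
    have h : D * Lstar + Lstar * Dᵀ - Lstar * M * Lstar
        = -(-(D * Lstar) - Lstar * Dᵀ + Lstar * M * Lstar) := by abel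
    rw [h, heq, neg_zero]
  have hQsM : Dᵀ * Ys + Ys * D = M := by
    have h1 := sandwich D M Lstar hLsinv
    rw [hzero] at h1
    simp only [Matrix.mul_zero, Matrix.zero_mul] at h1
    have h2 : Dᵀ * Ys + Ys * D - M = 0 := by
      rw [hYs]
      have h3 : Dᵀ * Lstar⁻¹ + Lstar⁻¹ * D - M = Lstar⁻¹ * D + Dᵀ * Lstar⁻¹ - M := by abel
      rw [h3, ← h1]
    exact sub_eq_zero.mp h2
  have hYspsd := lyapunov_psd D Ys hD hYssymm (by rw [hQsM]; exact hMpsd)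
  -- the difference
  have hZ : (Dᵀ * (Yh - Ys) + (Yh - Ys) * D).PosSemidef := by
    have h : Dᵀ * (Yh - Ys) + (Yh - Ys) * D
        = (Lhat⁻¹ * D + Dᵀ * Lhat⁻¹ - M) + (M - (Dᵀ * Ys + Ys * D)) := by
      rw [← hYh]
      simp only [Matrix.mul_sub, Matrix.sub_mul]
      abel
    rw [h, hQsM, sub_self, add_zero]
    exact hcong
  have hZpsd := lyapunov_psd D (Yh - Ys) hD
    (by rw [Matrix.IsSymm, Matrix.transpose_sub, hYhsymm.eq, hYssymm.eq]) hZ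
  -- conclusions
  have hLhat : Lhat.PosSemidef := by
    have := inv_psd Yh hYhsymm hYhdet hYhpsd
    rwa [hYh, Matrix.nonsing_inv_nonsing_inv _ hLhinv] at this
  have hfin := inv_antitone Yh Ys hYhsymm hYssymm hYhdet hYsdet hYspsd hZpsd
  rw [hYs, hYh, Matrix.nonsing_inv_nonsing_inv _ hLsinv,
    Matrix.nonsing_inv_nonsing_inv _ hLhinv] at hfin
  exact ⟨hLhat, hfin⟩

end LyapunovAux
end

section
/- Let D ∈ ℝᵏˣᵏ have all eigenvalues in the open right half plane and M ∈ ℝᵏˣᵏ be symmetric positive semidefinite. If Ŷ ∈ ℝᵏˣᵏ is symmetric, invertible, and satisfies -ŶD - DᵀŶ + M ≤ 0, then Ŷ is positive definite, and hence 𝓛̂ = Ŷ⁻¹ is positive definite. -/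
open Matrix Filter
open scoped NNReal ENNReal

section Aux

lemma isUnit_smul_mat {k : ℕ} {c : ℂ} (hc : c ≠ 0) {A : Matrix (Fin k) (Fin k) ℂ}
    (hA : IsUnit A) : IsUnit (c • A) := by
  have := hA.smul (Units.mk0 c hc)
  simpa [Units.smul_def] using this

lemma pow_entries_tendsto_zero {k : ℕ} (A : Matrix (Fin k) (Fin k) ℂ)
    (h : ∀ z ∈ spectrum ℂ A, ‖z‖₊ < 1) (i j : Fin k) :
    Tendsto (fun n : ℕ => ‖(A ^ n) i j‖) atTop (nhds 0) := by
  rcases Nat.eq_zero_or_pos k with rfl | hk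
  · exact absurd i.2 (by omega)
  haveI : Nonempty (Fin k) := ⟨⟨0, hk⟩⟩
  letI := Matrix.linftyOpNormedRing (n := Fin k) (α := ℂ)
  letI := Matrix.linftyOpNormedAlgebra (n := Fin k) (R := ℂ) (α := ℂ)
  haveI : CompleteSpace (Matrix (Fin k) (Fin k) ℂ) := by infer_instance
  have hrad : spectralRadius ℂ A < (1 : ℝ≥0) := spectrum.spectralRadius_lt_of_forall_lt A h
  obtain ⟨r, hr1, hr2⟩ := ENNReal.lt_iff_exists_nnreal_btwn.mp hrad
  have hr2' : r < 1 := by exact_mod_cast hr2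
  have hGel := spectrum.pow_nnnorm_pow_one_div_tendsto_nhds_spectralRadius A
  have hev : ∀ᶠ n : ℕ in atTop, (‖A ^ n‖₊ : ℝ≥0∞) ^ (1 / (n : ℝ)) < (r : ℝ≥0∞) :=
    hGel.eventually_lt_const hr1
  have hev2 : ∀ᶠ n : ℕ in atTop, ‖A ^ n‖ ≤ (r : ℝ) ^ n := by
    filter_upwards [hev, eventually_ge_atTop 1] with n hn hn1
    have hn0 : (n : ℝ) ≠ 0 := by positivity
    have h2 : ((‖A ^ n‖₊ : ℝ≥0∞) ^ (1 / (n : ℝ))) ^ (n : ℕ) ≤ (r : ℝ≥0∞) ^ n :=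
      pow_le_pow_left₀ zero_le hn.le n
    rw [← ENNReal.rpow_natCast (((‖A ^ n‖₊ : ℝ≥0∞)) ^ (1 / (n : ℝ))), ← ENNReal.rpow_mul,
      one_div, inv_mul_cancel₀ hn0, ENNReal.rpow_one] at h2
    have h3 : (‖A ^ n‖₊ : ℝ≥0∞) ≤ ((r ^ n : ℝ≥0) : ℝ≥0∞) := by
      rwa [ENNReal.coe_pow]
    have h4 : ‖A ^ n‖₊ ≤ r ^ n := by exact_mod_cast h3
    calc ‖A ^ n‖ = ((‖A ^ n‖₊ : ℝ)) := rfl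
    _ ≤ ((r ^ n : ℝ≥0) : ℝ) := by exact_mod_cast h4
    _ = (r : ℝ) ^ n := by push_cast; ring
  have hentry : ∀ᶠ n : ℕ in atTop, ‖(A ^ n) i j‖ ≤ (r : ℝ) ^ n := by
    filter_upwards [hev2] with n hn
    refine le_trans ?_ hn
    have : ‖(A ^ n) i j‖₊ ≤ ‖A ^ n‖₊ := by
      rw [Matrix.linfty_opNNNorm_def]
      exact le_trans (Finset.single_le_sum (f := fun j' => ‖(A ^ n) i j'‖₊)
        (fun _ _ => zero_le) (Finset.mem_univ j)) (Finset.le_sup (f := fun i => ∑ j' : Fin k, ‖(A ^ n) i j'‖₊) (Finset.mem_univ i))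
    exact_mod_cast this
  have : Tendsto (fun n : ℕ => (r : ℝ) ^ n) atTop (nhds 0) :=
    tendsto_pow_atTop_nhds_zero_of_lt_one r.2 (by exact_mod_cast hr2')
  exact squeeze_zero_norm' (by simpa using hentry) this

lemma cayley_spectrum {k : ℕ} (Dc : Matrix (Fin k) (Fin k) ℂ)
    (hD : ∀ μ ∈ spectrum ℂ Dc, 0 < μ.re)
    (hu : IsUnit (Dc + 1)) :
    ∀ z ∈ spectrum ℂ ((Dc - 1) * (Dc + 1)⁻¹), ‖z‖₊ < 1 := by
  intro lam hlam
  by_contra hge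
  push_neg at hge
  set Ec := (Dc + 1)⁻¹ with hEc
  have hud : IsUnit (Dc + 1).det := (Matrix.isUnit_iff_isUnit_det _).mp hu
  have hE1 : (Dc + 1) * Ec = 1 := Matrix.mul_nonsing_inv _ hud
  have hEu : IsUnit Ec := Matrix.isUnit_nonsing_inv_iff.mpr hu
  have hnon : ¬ IsUnit (lam • (1 : Matrix (Fin k) (Fin k) ℂ) - (Dc - 1) * Ec) := by
    have := spectrum.mem_iff.mp hlam
    rwa [Algebra.algebraMap_eq_smul_one] at this
  have hs : lam • (1 : Matrix (Fin k) (Fin k) ℂ) - (Dc - 1) * Ec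
      = ((lam - 1) • Dc + (lam + 1) • (1 : Matrix (Fin k) (Fin k) ℂ)) * Ec := by
    have h0 : lam • (1 : Matrix (Fin k) (Fin k) ℂ) = (lam • (Dc + 1)) * Ec := by
      rw [smul_mul_assoc, hE1]
    rw [h0, ← sub_mul]
    congr 1
    module
  -- lam ≠ 1
  have hlam1 : lam ≠ 1 := by
    rintro rfl
    apply hnon
    rw [hs]
    have h2 : ((1:ℂ) - 1) • Dc + ((1:ℂ) + 1) • (1 : Matrix (Fin k) (Fin k) ℂ)
        = (2:ℂ) • (1 : Matrix (Fin k) (Fin k) ℂ) := by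
      norm_num
    rw [h2, smul_mul_assoc, one_mul]
    exact isUnit_smul_mat two_ne_zero hEu
  have hlam1' : (1:ℂ) - lam ≠ 0 := fun h => hlam1 (by linear_combination -h)
  set μ : ℂ := (lam + 1) / (1 - lam) with hμdef
  have hμ : (-(lam - 1)) * μ = lam + 1 := by
    rw [hμdef, mul_div_assoc', div_eq_iff hlam1']
    ring
  have hkey : (lam - 1) • Dc + (lam + 1) • (1 : Matrix (Fin k) (Fin k) ℂ)
      = (-(lam - 1)) • (μ • (1 : Matrix (Fin k) (Fin k) ℂ) - Dc) := by
    rw [smul_sub, smul_smul, hμ]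
    module
  have hne : -(lam - 1) ≠ 0 := by
    intro h; exact hlam1' (by linear_combination h)
  have hnonμ : ¬ IsUnit (μ • (1 : Matrix (Fin k) (Fin k) ℂ) - Dc) := by
    intro hU
    apply hnon
    rw [hs, hkey, smul_mul_assoc]
    exact isUnit_smul_mat hne (hU.mul hEu)
  have hμspec : μ ∈ spectrum ℂ Dc :=
    spectrum.mem_iff.mpr (by rwa [Algebra.algebraMap_eq_smul_one])
  have hpos := hD μ hμspec
  -- compute μ.re ≤ 0
  have h1 : (1:ℝ) ≤ ‖lam‖ := by exact_mod_cast hge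
  have h2 : (1:ℝ) ≤ Complex.normSq lam := by
    have := Complex.sq_norm lam
    nlinarith
  have hre : μ.re ≤ 0 := by
    rw [hμdef, Complex.div_re]
    have hnsq : 0 ≤ Complex.normSq (1 - lam) := Complex.normSq_nonneg _
    rw [← add_div]
    apply div_nonpos_of_nonpos_of_nonneg _ hnsq
    simp only [Complex.add_re, Complex.sub_re, Complex.one_re, Complex.add_im,
      Complex.sub_im, Complex.one_im]
    have := Complex.normSq_apply lam
    nlinarith [Complex.normSq_apply lam]
  linarith



end Aux

theorem stmt11 {k : ℕ} (D M Y : Matrix (Fin k) (Fin k) ℝ)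
    (hD : ∀ μ ∈ spectrum ℂ (D.map (algebraMap ℝ ℂ)), 0 < μ.re)
    (hMs : M.IsSymm) (hMpsd : M.PosSemidef)
    (hY : Y.IsSymm) (hYinv : IsUnit Y.det)
    (hineq : (-(-(Y * D) - Dᵀ * Y + M)).PosSemidef) :
    Y.PosDef ∧ (Y⁻¹).PosDef := by
  classical
  -- the Lyapunov quantity
  have hQ : (Y * D + Dᵀ * Y).PosSemidef := by
    have h : Y * D + Dᵀ * Y = (-(-(Y * D) - Dᵀ * Y + M)) + M := by abel
    rw [h]; exact hineq.add hMpsd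
  -- complexification
  set φ : Matrix (Fin k) (Fin k) ℝ →+* Matrix (Fin k) (Fin k) ℂ :=
    (algebraMap ℝ ℂ).mapMatrix with hφ
  have hφD : φ D = D.map (algebraMap ℝ ℂ) := rfl
  -- D + 1 is invertible over ℂ
  have hDu : IsUnit (φ D + 1) := by
    by_contra hcon
    have hm : (-1 : ℂ) ∈ spectrum ℂ (D.map (algebraMap ℝ ℂ)) := by
      rw [spectrum.mem_iff, Algebra.algebraMap_eq_smul_one]
      intro hU
      apply hcon
      have : (-1 : ℂ) • (1 : Matrix (Fin k) (Fin k) ℂ) - D.map (algebraMap ℝ ℂ)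
          = -(φ D + 1) := by
        rw [← hφD]; module
      rw [this] at hU
      exact IsUnit.neg_iff _ |>.mp hU
    have := hD _ hm
    norm_num at this
  -- D + 1 is invertible over ℝ
  have hDru : IsUnit (D + 1) := by
    rw [Matrix.isUnit_iff_isUnit_det]
    have hψ : φ (D + 1) = φ D + 1 := by rw [map_add, _root_.map_one]
    have hcd : (algebraMap ℝ ℂ) (D + 1).det = (φ D + 1).det := by
      rw [← hψ]; exact (algebraMap ℝ ℂ).map_det (D + 1)
    have : (φ D + 1).det ≠ 0 := by
      intro h0
      rw [Matrix.isUnit_iff_isUnit_det, h0] at hDu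
      exact hDu.ne_zero rfl
    have hne : (D + 1).det ≠ 0 := by
      intro h0
      apply this
      rw [← hcd, h0, map_zero]
    exact isUnit_iff_ne_zero.mpr hne
  have hdet : IsUnit (D + 1).det := (Matrix.isUnit_iff_isUnit_det _).mp hDru
  set E : Matrix (Fin k) (Fin k) ℝ := (D + 1)⁻¹ with hE
  have hE1 : (D + 1) * E = 1 := Matrix.mul_nonsing_inv _ hdet
  have hE2 : E * (D + 1) = 1 := Matrix.nonsing_inv_mul _ hdet
  set C : Matrix (Fin k) (Fin k) ℝ := (D - 1) * E with hC
  -- Stein inequality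
  have hstein : (Y - Cᵀ * Y * C).PosSemidef := by
    have hTE : Eᵀ * (D + 1)ᵀ = 1 := by rw [← transpose_mul, hE1, transpose_one]
    have key : (D + 1)ᵀ * Y * (D + 1)
        = (D - 1)ᵀ * Y * (D - 1) + ((Y * D + Dᵀ * Y) + (Y * D + Dᵀ * Y)) := by
      simp only [transpose_add, transpose_sub, transpose_one]
      noncomm_ring
    have hmain : Y - Cᵀ * Y * C = Eᵀ * ((Y * D + Dᵀ * Y) + (Y * D + Dᵀ * Y)) * E := by
      have expand : Eᵀ * ((D + 1)ᵀ * Y * (D + 1)) * E = Y := by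
        calc Eᵀ * ((D + 1)ᵀ * Y * (D + 1)) * E
            = (Eᵀ * (D + 1)ᵀ) * Y * ((D + 1) * E) := by
              simp only [Matrix.mul_assoc]
          _ = Y := by rw [hTE, hE1, one_mul, mul_one]
      have expandC : Cᵀ * Y * C = Eᵀ * ((D - 1)ᵀ * Y * (D - 1)) * E := by
        simp only [hC, transpose_mul, Matrix.mul_assoc]
      calc Y - Cᵀ * Y * C
          = Eᵀ * ((D + 1)ᵀ * Y * (D + 1)) * E - Eᵀ * ((D - 1)ᵀ * Y * (D - 1)) * E := by
            rw [expand, ← expandC]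
        _ = Eᵀ * ((Y * D + Dᵀ * Y) + (Y * D + Dᵀ * Y)) * E := by
            rw [key]; noncomm_ring
    rw [hmain]
    have h := (hQ.add hQ).conjTranspose_mul_mul_same (B := E)
    rwa [Matrix.conjTranspose_eq_transpose_of_trivial] at h
  -- iterate
  have hiter : ∀ n : ℕ, (Y - (C ^ n)ᵀ * Y * (C ^ n)).PosSemidef := by
    intro n
    induction n with
    | zero => simpa using Matrix.PosSemidef.zero
    | succ n ih =>
      have hstep : Y - (C ^ (n + 1))ᵀ * Y * (C ^ (n + 1))
          = (Y - Cᵀ * Y * C) + Cᵀ * (Y - (C ^ n)ᵀ * Y * (C ^ n)) * C := by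
        rw [pow_succ]
        simp only [transpose_mul]
        noncomm_ring
      rw [hstep]
      refine hstein.add ?_
      have h := ih.conjTranspose_mul_mul_same (B := C)
      rwa [Matrix.conjTranspose_eq_transpose_of_trivial] at h
  -- complexified Cayley matrix
  have hψ : φ (D + 1) = φ D + 1 := by rw [map_add, _root_.map_one]
  have hφE : φ E = (φ D + 1)⁻¹ := by
    refine (Matrix.inv_eq_right_inv ?_).symm
    have h := congrArg φ hE1
    rw [_root_.map_mul, hψ, _root_.map_one] at h
    exact h
  have hφC : φ C = (φ D - 1) * (φ D + 1)⁻¹ := by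
    rw [hC, _root_.map_mul, _root_.map_sub, _root_.map_one, hφE]
  have hspec := cayley_spectrum (φ D) hD hDu
  -- the quadratic form along powers of C tends to zero
  have hent : ∀ x : Fin k → ℝ,
      Tendsto (fun n : ℕ => ((C ^ n) *ᵥ x) ⬝ᵥ Y *ᵥ ((C ^ n) *ᵥ x)) atTop (nhds 0) := by
    intro x
    have hCn : Tendsto (fun n : ℕ => C ^ n) atTop (nhds (0 : Matrix (Fin k) (Fin k) ℝ)) := by
      refine tendsto_pi_nhds.mpr fun i => tendsto_pi_nhds.mpr fun j => ?_
      have h0 := pow_entries_tendsto_zero ((φ D - 1) * (φ D + 1)⁻¹) hspec i j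
      rw [← hφC] at h0
      have hnorm : ∀ n : ℕ, ‖((φ C) ^ n) i j‖ = ‖(C ^ n) i j‖ := by
        intro n
        rw [← map_pow]
        simp [hφ, RingHom.mapMatrix_apply]
      simp only [hnorm] at h0
      have : Tendsto (fun n : ℕ => (C ^ n) i j) atTop (nhds 0) :=
        tendsto_zero_iff_norm_tendsto_zero.mpr h0
      exact this
    have hcont : Continuous fun A : Matrix (Fin k) (Fin k) ℝ =>
        (A *ᵥ x) ⬝ᵥ Y *ᵥ (A *ᵥ x) := by
      apply Continuous.dotProduct
      · exact continuous_id.matrix_mulVec continuous_const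
      · exact continuous_const.matrix_mulVec (continuous_id.matrix_mulVec continuous_const)
    have h := (hcont.tendsto 0).comp hCn
    simpa [Function.comp_def] using h
  -- Y is positive semidefinite
  have hYpsd : Y.PosSemidef := by
    refine PosSemidef.of_dotProduct_mulVec_nonneg ?_ ?_
    · rw [Matrix.IsHermitian, Matrix.conjTranspose_eq_transpose_of_trivial]
      exact hY
    · intro x
      have hb : ∀ n : ℕ, ((C ^ n) *ᵥ x) ⬝ᵥ Y *ᵥ ((C ^ n) *ᵥ x) ≤ x ⬝ᵥ Y *ᵥ x := by
        intro n
        have h2 := (hiter n).dotProduct_mulVec_nonneg x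
        have h3 : x ⬝ᵥ ((C ^ n)ᵀ * Y * (C ^ n)) *ᵥ x
            = ((C ^ n) *ᵥ x) ⬝ᵥ Y *ᵥ ((C ^ n) *ᵥ x) := by
          rw [← Matrix.mulVec_mulVec, Matrix.dotProduct_mulVec, ← Matrix.vecMul_vecMul,
            Matrix.vecMul_transpose, ← Matrix.dotProduct_mulVec]
        rw [star_trivial, Matrix.sub_mulVec, dotProduct_sub, h3] at h2
        linarith
      have := le_of_tendsto (hent x) (Filter.Eventually.of_forall hb)
      simpa using this
  -- positive definiteness
  have hYpd : Y.PosDef := by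
    refine PosDef.of_dotProduct_mulVec_pos hYpsd.1 fun x hx => ?_
    rcases (hYpsd.dotProduct_mulVec_nonneg x).lt_or_eq with h | h
    · exact h
    · exfalso
      have h0 : Y *ᵥ x = 0 := (hYpsd.dotProduct_mulVec_zero_iff x).mp h.symm
      apply hx
      have : Y⁻¹ *ᵥ (Y *ᵥ x) = x := by
        rw [Matrix.mulVec_mulVec, Matrix.nonsing_inv_mul _ hYinv, Matrix.one_mulVec]
      rw [h0, Matrix.mulVec_zero] at this
      exact this.symm
  exact ⟨hYpd, hYpd.inv⟩
end

section
/- Let A₀ ∈ ℝⁿˣⁿ, B ∈ ℝⁿˣᵐ. Suppose there exists a nonzero v ∈ ℝⁿ and λ ∈ ℝ, λ ≠ 0, with A₀ᵀv = λv and Bᵀv = 0 (a real nonzero uncontrollable eigenvalue). Then for X = αvvᵀ, Ric(X) = -A₀ᵀX - XA₀ + XBBᵀX = -2αλ vvᵀ; choosing the sign of α so that αλ ≥ 0 yields solutions of Ric(X) ≤ 0 of arbitrarily large norm, so the solution set of Ric(X) ≤ 0 is unbounded. -/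
open Matrix
attribute [local instance] Matrix.linftyOpNormedAddCommGroup

lemma mul_vmv {n : ℕ} (A : Matrix (Fin n) (Fin n) ℝ) (v w : Fin n → ℝ) :
    A * vecMulVec v w = vecMulVec (A.mulVec v) w := by
  ext i j
  simp only [vecMulVec_apply, mul_apply, mulVec, dotProduct]
  rw [Finset.sum_mul]
  exact Finset.sum_congr rfl fun _ _ => by ring

lemma vmv_mul {n : ℕ} (A : Matrix (Fin n) (Fin n) ℝ) (v w : Fin n → ℝ) :
    vecMulVec v w * A = vecMulVec v (Aᵀ.mulVec w) := by
  ext i j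
  simp only [vecMulVec_apply, mul_apply, mulVec, dotProduct, transpose_apply]
  rw [Finset.mul_sum]
  exact Finset.sum_congr rfl fun _ _ => by ring

lemma ric_eq {n m : ℕ} (A₀ : Matrix (Fin n) (Fin n) ℝ) (B : Matrix (Fin n) (Fin m) ℝ)
    (v : Fin n → ℝ) (lam : ℝ)
    (heig : A₀ᵀ.mulVec v = lam • v) (hB : Bᵀ.mulVec v = 0) (α : ℝ) :
    -(A₀ᵀ * (α • vecMulVec v v)) - (α • vecMulVec v v) * A₀ +
          (α • vecMulVec v v) * (B * Bᵀ) * (α • vecMulVec v v)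
        = (-(2 * α * lam)) • vecMulVec v v := by
  have h1 : A₀ᵀ * vecMulVec v v = lam • vecMulVec v v := by
    rw [mul_vmv, heig]
    ext i j; simp [vecMulVec_apply]; ring
  have h2 : vecMulVec v v * A₀ = lam • vecMulVec v v := by
    rw [vmv_mul, heig]
    ext i j; simp [vecMulVec_apply]; ring
  have h3 : vecMulVec v v * (B * Bᵀ) * vecMulVec v v = 0 := by
    have : vecMulVec v v * B = 0 := by
      ext i j
      simp only [mul_apply, vecMulVec_apply, Matrix.zero_apply]
      have := congrFun hB j
      simp only [mulVec, dotProduct, transpose_apply, Pi.zero_apply] at this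
      calc ∑ x, v i * v x * B x j = v i * ∑ x, B x j * v x := by
            rw [Finset.mul_sum]; exact Finset.sum_congr rfl fun _ _ => by ring
        _ = 0 := by rw [this, mul_zero]
    rw [show vecMulVec v v * (B * Bᵀ) * vecMulVec v v
        = (vecMulVec v v * B) * (Bᵀ * vecMulVec v v) by simp only [Matrix.mul_assoc],
      this, Matrix.zero_mul]
  rw [Matrix.mul_smul, h1, Matrix.smul_mul, h2]
  rw [show (α • vecMulVec v v) * (B * Bᵀ) * (α • vecMulVec v v)
      = (α * α) • (vecMulVec v v * (B * Bᵀ) * vecMulVec v v) by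
    rw [Matrix.smul_mul, Matrix.smul_mul, Matrix.mul_smul, smul_smul]]
  rw [h3, smul_zero, add_zero, smul_smul]
  have : -((α * lam) • vecMulVec v v) - (α * lam) • vecMulVec v v
      = (-(α * lam) - α * lam) • vecMulVec v v := by rw [sub_smul, neg_smul]
  rw [this]
  congr 1
  ring

theorem stmt12 {n m : ℕ} (A₀ : Matrix (Fin n) (Fin n) ℝ) (B : Matrix (Fin n) (Fin m) ℝ)
    (v : Fin n → ℝ) (hv : v ≠ 0) (lam : ℝ) (hlam : lam ≠ 0)
    (heig : A₀ᵀ.mulVec v = lam • v) (hB : Bᵀ.mulVec v = 0) :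
    (∀ α : ℝ,
      -(A₀ᵀ * (α • vecMulVec v v)) - (α • vecMulVec v v) * A₀ +
          (α • vecMulVec v v) * (B * Bᵀ) * (α • vecMulVec v v)
        = (-(2 * α * lam)) • vecMulVec v v) ∧
    (∀ R : ℝ, 0 < R → ∃ X : Matrix (Fin n) (Fin n) ℝ, X.IsSymm ∧
      (-(-(A₀ᵀ * X) - X * A₀ + X * (B * Bᵀ) * X)).PosSemidef ∧ R < ‖X‖) := by
  refine ⟨ric_eq A₀ B v lam heig hB, ?_⟩
  intro R hR
  have hM0 : vecMulVec v v ≠ 0 := by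
    intro h
    obtain ⟨i, hi⟩ := Function.ne_iff.mp hv
    have := congrFun (congrFun h i) i
    simp only [vecMulVec_apply, Matrix.zero_apply] at this
    exact hi (by simpa using mul_self_eq_zero.mp this)
  have hN : (0:ℝ) < ‖vecMulVec v v‖ := norm_pos_iff.mpr hM0
  set c : ℝ := (R + 1) / ‖vecMulVec v v‖ with hc
  have hcpos : 0 < c := div_pos (by linarith) hN
  set α : ℝ := if 0 < lam then c else -c with hα
  have hαlam : 0 < α * lam := by
    rcases lt_or_gt_of_ne hlam with h | h
    · rw [hα, if_neg (by linarith)]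
      exact mul_pos_of_neg_of_neg (by linarith) h
    · rw [hα, if_pos h]; exact mul_pos hcpos h
  have habs : |α| = c := by
    rcases lt_or_gt_of_ne hlam with h | h
    · rw [hα, if_neg (by linarith), abs_neg, abs_of_pos hcpos]
    · rw [hα, if_pos h, abs_of_pos hcpos]
  refine ⟨α • vecMulVec v v, ?_, ?_, ?_⟩
  · unfold Matrix.IsSymm
    ext i j
    simp [vecMulVec_apply, mul_comm]
  · rw [ric_eq A₀ B v lam heig hB α]
    rw [neg_smul, neg_neg]
    refine posSemidef_iff_dotProduct_mulVec.mpr ⟨?_, ?_⟩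
    · unfold Matrix.IsHermitian
      ext i j
      simp [vecMulVec_apply, mul_comm]
    · intro x
      have : star x ⬝ᵥ ((2 * α * lam) • vecMulVec v v).mulVec x
          = (2 * α * lam) * (v ⬝ᵥ x) ^ 2 := by
        simp only [smul_mulVec, dotProduct_smul, smul_eq_mul]
        congr 1
        simp only [mulVec, dotProduct, vecMulVec_apply, star_trivial]
        have key : ∀ i, (∑ j, v i * v j * x j) = v i * ∑ j, v j * x j := fun i => by
          rw [Finset.mul_sum]; exact Finset.sum_congr rfl fun _ _ => by ring
        calc ∑ i, x i * ∑ j, v i * v j * x j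
            = ∑ i, (x i * v i) * ∑ j, v j * x j := by
              exact Finset.sum_congr rfl fun i _ => by rw [key i]; ring
          _ = (∑ i, x i * v i) * ∑ j, v j * x j := by rw [Finset.sum_mul]
          _ = (∑ i, v i * x i) ^ 2 := by
              rw [sq]; congr 1; exact Finset.sum_congr rfl fun _ _ => mul_comm _ _
      rw [this]
      have h2 := sq_nonneg (v ⬝ᵥ x)
      nlinarith
  · letI := Matrix.linftyOpNormSMulClass (α := ℝ) (R := ℝ) (m := Fin n) (n := Fin n)
    rw [norm_smul]
    have : ‖α‖ = c := by rw [Real.norm_eq_abs, habs]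
    rw [this, hc, div_mul_cancel₀ _ (ne_of_gt hN)]
    linarith
end

section
/- Let D ∈ ℝᵏˣᵏ have all eigenvalues in the open right half plane, M ∈ ℝᵏˣᵏ symmetric positive semidefinite, and suppose the equation -D𝓛 - 𝓛Dᵀ + 𝓛M𝓛 = 0 has an invertible symmetric solution 𝓛* (equivalently Y* = (𝓛*)⁻¹ solves -Y*D - DᵀY* + M = 0). Then the map sending a symmetric positive definite P ∈ ℝᵏˣᵏ to 𝓛̂ = (Y* + Δ_P)⁻¹, where Δ_P is the unique solution of Δ_P D + DᵀΔ_P = P, is a bijection between positive definite k×k matrices and invertible symmetric solutions 𝓛̂ of the strict inequality -D𝓛̂ - 𝓛̂Dᵀ + 𝓛̂M𝓛̂ < 0. -/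
open Matrix

open Matrix Polynomial

namespace Stmt15Aux

variable {k : ℕ}

lemma mem_spec_iff (A : Matrix (Fin k) (Fin k) ℂ) (μ : ℂ) :
    μ ∈ spectrum ℂ A ↔ (μ • (1 : Matrix (Fin k) (Fin k) ℂ) - A).det = 0 := by
  rw [spectrum.mem_iff, Algebra.algebraMap_eq_smul_one, Matrix.isUnit_iff_isUnit_det,
    isUnit_iff_ne_zero, not_not]

lemma eval_charpoly' (A : Matrix (Fin k) (Fin k) ℂ) (μ : ℂ) :
    A.charpoly.eval μ = (μ • (1 : Matrix (Fin k) (Fin k) ℂ) - A).det := by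
  rw [Matrix.charpoly]
  rw [show Polynomial.eval μ ((charmatrix A).det) = ((charmatrix A).map (Polynomial.evalRingHom μ)).det from (RingHom.map_det (Polynomial.evalRingHom μ) (charmatrix A)).symm ▸ rfl]
  congr 1
  ext i j
  by_cases h : i = j <;>
    simp [h, charmatrix_apply, Matrix.sub_apply, Matrix.smul_apply, Matrix.one_apply,
      Matrix.diagonal_apply]

lemma sylvester_inj (D : Matrix (Fin k) (Fin k) ℝ)
    (hD : ∀ μ ∈ spectrum ℂ (D.map (algebraMap ℝ ℂ)), 0 < μ.re)
    (Δ : Matrix (Fin k) (Fin k) ℝ) (h : Δ * D + Dᵀ * Δ = 0) : Δ = 0 := by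
  set f := algebraMap ℝ ℂ with hf
  set Dc := D.map f with hDc
  set Δc := Δ.map f with hΔc
  have hcom : Δc * Dc = (-Dcᵀ) * Δc := by
    have h1 : Δ * D = -(Dᵀ * Δ) := by
      rw [eq_neg_iff_add_eq_zero]; exact h
    have h2 := congrArg f.mapMatrix h1
    simp only [_root_.map_mul, map_neg, RingHom.mapMatrix_apply, Matrix.map_mul,
      Matrix.transpose_map] at h2
    rw [← hDc, ← hΔc] at h2
    rw [h2, neg_mul]
  have hpow : ∀ n : ℕ, Δc * Dc ^ n = (-Dcᵀ) ^ n * Δc := by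
    intro n
    induction n with
    | zero => simp
    | succ n ih =>
      rw [pow_succ, pow_succ, ← mul_assoc, ih, mul_assoc, hcom, ← mul_assoc]
  have hpoly : ∀ p : ℂ[X], Δc * aeval Dc p = aeval (-Dcᵀ) p * Δc := by
    intro p
    induction p using Polynomial.induction_on' with
    | add p q hp hq => simp [map_add, mul_add, add_mul, hp, hq]
    | monomial n a =>
      simp only [aeval_monomial]
      calc Δc * (algebraMap ℂ _ a * Dc ^ n) = algebraMap ℂ _ a * (Δc * Dc ^ n) := by
            rw [← mul_assoc, ← Algebra.commutes, mul_assoc]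
        _ = algebraMap ℂ _ a * ((-Dcᵀ) ^ n * Δc) := by rw [hpow]
        _ = algebraMap ℂ _ a * (-Dcᵀ) ^ n * Δc := by rw [mul_assoc]
  have h0 : aeval (-Dcᵀ) Dc.charpoly * Δc = 0 := by
    rw [← hpoly, Matrix.aeval_self_charpoly, mul_zero]
  have hu : IsUnit (aeval (-Dcᵀ) Dc.charpoly) := by
    by_contra hnu
    have hsplit := (IsAlgClosed.splits Dc.charpoly).eq_prod_roots_of_monic
      Dc.charpoly_monic
    have hnu' : ¬ IsUnit (aeval (-Dcᵀ)
        (Multiset.map (fun x : ℂ => X - C x) Dc.charpoly.roots).prod) := by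
      rw [← hsplit]; exact hnu
    obtain ⟨r, hrspec, hreval⟩ := spectrum.exists_mem_of_not_isUnit_aeval_prod hnu'
    -- r is a root of charpoly, hence r ∈ spectrum Dc, hence 0 < r.re
    have hr1 : r ∈ spectrum ℂ Dc := by
      rw [mem_spec_iff, ← eval_charpoly']; exact hreval
    have hr1' : 0 < r.re := hD r hr1
    -- r ∈ spectrum (-Dcᵀ), hence -r ∈ spectrum Dcᵀ = spectrum Dc, so 0 < -r.re
    have hr2 : (-r) ∈ spectrum ℂ Dc := by
      rw [mem_spec_iff]
      have hr2a : (-r) ∈ spectrum ℂ (Dcᵀ) := by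
        rw [← spectrum.neg_eq] at hrspec
        simpa using hrspec
      rw [mem_spec_iff] at hr2a
      have : ((-r) • (1 : Matrix (Fin k) (Fin k) ℂ) - Dc)ᵀ
          = (-r) • (1 : Matrix (Fin k) (Fin k) ℂ) - Dcᵀ := by
        simp [Matrix.transpose_sub, Matrix.transpose_smul]
      rw [← Matrix.det_transpose, this]
      exact hr2a
    have := hD _ hr2
    simp only [Complex.neg_re] at this
    linarith
  have hΔc0 : Δc = 0 := hu.mul_right_eq_zero.mp h0
  ext i j
  have h2 : Δc i j = 0 := by rw [hΔc0]; rfl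
  rw [hΔc, Matrix.map_apply] at h2
  have h3 := (_root_.map_eq_zero f).mp h2
  simp [h3]


lemma sylvester_existsUnique (D : Matrix (Fin k) (Fin k) ℝ)
    (hD : ∀ μ ∈ spectrum ℂ (D.map (algebraMap ℝ ℂ)), 0 < μ.re)
    (P : Matrix (Fin k) (Fin k) ℝ) :
    ∃! Δ : Matrix (Fin k) (Fin k) ℝ, Δ * D + Dᵀ * Δ = P := by
  set F : Matrix (Fin k) (Fin k) ℝ →ₗ[ℝ] Matrix (Fin k) (Fin k) ℝ :=
    LinearMap.mulRight ℝ D + LinearMap.mulLeft ℝ Dᵀ with hF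
  have hFa : ∀ Δ, F Δ = Δ * D + Dᵀ * Δ := fun Δ => by
    simp [hF, LinearMap.add_apply, LinearMap.mulRight_apply, LinearMap.mulLeft_apply]
  have hinj : Function.Injective F := by
    intro a b hab
    have : (a - b) * D + Dᵀ * (a - b) = 0 := by
      rw [sub_mul, mul_sub]
      have : a * D + Dᵀ * a = b * D + Dᵀ * b := by rw [← hFa, ← hFa, hab]
      rw [sub_add_sub_comm, this, sub_self]
    have := sylvester_inj D hD _ this
    exact sub_eq_zero.mp this
  obtain ⟨Δ, hΔ⟩ := (LinearMap.injective_iff_surjective.mp hinj) P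
  refine ⟨Δ, ?_, ?_⟩
  · show Δ * D + Dᵀ * Δ = P
    rw [← hFa]; exact hΔ
  · intro y hy
    replace hy : y * D + Dᵀ * y = P := hy
    refine hinj ?_
    rw [hFa, hFa, hy, ← hFa Δ, hΔ]

lemma posdef_conj {A B : Matrix (Fin k) (Fin k) ℝ} (hA : A.PosDef) (hB : IsUnit B.det) :
    (Bᵀ * A * B).PosDef := by
  have hAt : Aᵀ = A := by
    have := hA.isHermitian
    rwa [Matrix.IsHermitian, conjTranspose_eq_transpose_of_trivial] at this
  refine Matrix.PosDef.of_dotProduct_mulVec_pos ?_ ?_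
  · rw [Matrix.IsHermitian, conjTranspose_eq_transpose_of_trivial]
    rw [Matrix.transpose_mul, Matrix.transpose_mul, Matrix.transpose_transpose, hAt,
      Matrix.mul_assoc]
  · intro x hx
    have hBx : B *ᵥ x ≠ 0 := by
      intro hc
      have : B.det = 0 := Matrix.exists_mulVec_eq_zero_iff.mp ⟨x, hx, hc⟩
      rw [this] at hB
      exact (not_isUnit_zero : ¬ IsUnit (0:ℝ)) hB
    have hpos := hA.dotProduct_mulVec_pos hBx
    have hcalc : star x ⬝ᵥ (Bᵀ * A * B) *ᵥ x = star (B *ᵥ x) ⬝ᵥ A *ᵥ (B *ᵥ x) := by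
      rw [star_trivial, star_trivial, ← Matrix.mulVec_mulVec, ← Matrix.mulVec_mulVec,
        Matrix.dotProduct_mulVec, Matrix.vecMul_transpose]
    rw [hcalc]
    exact hpos

end Stmt15Aux

open Stmt15Aux

theorem stmt15 {k : ℕ} (D M Lstar : Matrix (Fin k) (Fin k) ℝ)
    (hD : ∀ μ ∈ spectrum ℂ (D.map (algebraMap ℝ ℂ)), 0 < μ.re)
    (hMs : M.IsSymm) (hMpsd : M.PosSemidef)
    (hLs : Lstar.IsSymm) (hLsinv : IsUnit Lstar.det)
    (heq : -(D * Lstar) - Lstar * Dᵀ + Lstar * M * Lstar = 0) :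
    (∀ P : Matrix (Fin k) (Fin k) ℝ, ∃! Δ : Matrix (Fin k) (Fin k) ℝ, Δ * D + Dᵀ * Δ = P) ∧
    (∀ P Δ : Matrix (Fin k) (Fin k) ℝ, P.PosDef → Δ * D + Dᵀ * Δ = P →
      IsUnit (Lstar⁻¹ + Δ).det ∧ ((Lstar⁻¹ + Δ)⁻¹).IsSymm ∧
      (D * (Lstar⁻¹ + Δ)⁻¹ + (Lstar⁻¹ + Δ)⁻¹ * Dᵀ -
        (Lstar⁻¹ + Δ)⁻¹ * M * (Lstar⁻¹ + Δ)⁻¹).PosDef) ∧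
    (∀ Lhat : Matrix (Fin k) (Fin k) ℝ, Lhat.IsSymm → IsUnit Lhat.det →
      (D * Lhat + Lhat * Dᵀ - Lhat * M * Lhat).PosDef →
      ∃! P : Matrix (Fin k) (Fin k) ℝ, P.PosDef ∧
        ∃ Δ : Matrix (Fin k) (Fin k) ℝ, Δ * D + Dᵀ * Δ = P ∧ Lhat = (Lstar⁻¹ + Δ)⁻¹) := by
  have hEU : ∀ P : Matrix (Fin k) (Fin k) ℝ,
      ∃! Δ : Matrix (Fin k) (Fin k) ℝ, Δ * D + Dᵀ * Δ = P :=
    fun P => sylvester_existsUnique D hD P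
  have h1 : Lstar * M * Lstar - (D * Lstar + Lstar * Dᵀ) = 0 := by rw [← heq]; abel
  have h1' : Lstar * M * Lstar = D * Lstar + Lstar * Dᵀ := sub_eq_zero.mp h1
  have hYL : Lstar⁻¹ * Lstar = 1 := Matrix.nonsing_inv_mul _ hLsinv
  have hLY : Lstar * Lstar⁻¹ = 1 := Matrix.mul_nonsing_inv _ hLsinv
  have hYs : (Lstar⁻¹)ᵀ = Lstar⁻¹ := by
    rw [Matrix.transpose_nonsing_inv, hLs.eq]
  have hYM : Lstar⁻¹ * D + Dᵀ * Lstar⁻¹ = M := by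
    have e1 : Lstar⁻¹ * (Lstar * M * Lstar) * Lstar⁻¹ = M := by
      calc Lstar⁻¹ * (Lstar * M * Lstar) * Lstar⁻¹
          = (Lstar⁻¹ * Lstar) * M * (Lstar * Lstar⁻¹) := by noncomm_ring
        _ = M := by rw [hYL, hLY, one_mul, mul_one]
    have e2 : Lstar⁻¹ * (D * Lstar + Lstar * Dᵀ) * Lstar⁻¹
        = Lstar⁻¹ * D + Dᵀ * Lstar⁻¹ := by
      calc Lstar⁻¹ * (D * Lstar + Lstar * Dᵀ) * Lstar⁻¹
          = Lstar⁻¹ * D * (Lstar * Lstar⁻¹) + (Lstar⁻¹ * Lstar) * (Dᵀ * Lstar⁻¹) := by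
            noncomm_ring
        _ = Lstar⁻¹ * D + Dᵀ * Lstar⁻¹ := by rw [hYL, hLY, one_mul, mul_one]
    rw [← e2, ← h1', e1]
  refine ⟨hEU, ?_, ?_⟩
  · intro P Δ hP hΔeq
    have hPs : Pᵀ = P := by
      have := hP.isHermitian
      rwa [Matrix.IsHermitian, conjTranspose_eq_transpose_of_trivial] at this
    have hΔs : Δᵀ = Δ := by
      have hT : Δᵀ * D + Dᵀ * Δᵀ = P := by
        have h3 := congrArg Matrix.transpose hΔeq
        simp only [Matrix.transpose_add, Matrix.transpose_mul,
          Matrix.transpose_transpose] at h3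
        rw [add_comm, ← hPs]
        exact h3
      exact (hEU P).unique hT hΔeq
    set S := Lstar⁻¹ + Δ with hS
    have hSs : Sᵀ = S := by rw [hS, Matrix.transpose_add, hYs, hΔs]
    have hSeq : S * D + Dᵀ * S = M + P := by
      rw [hS, add_mul, mul_add,
        show Lstar⁻¹ * D + Δ * D + (Dᵀ * Lstar⁻¹ + Dᵀ * Δ)
          = (Lstar⁻¹ * D + Dᵀ * Lstar⁻¹) + (Δ * D + Dᵀ * Δ) by abel, hYM, hΔeq]
    have hMP : (M + P).PosDef := Matrix.PosDef.posSemidef_add hMpsd hP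
    have hSdet : IsUnit S.det := by
      by_contra hns
      have hdet0 : S.det = 0 := by
        by_contra hne
        exact hns (isUnit_iff_ne_zero.mpr hne)
      obtain ⟨v, hv, hv0⟩ := Matrix.exists_mulVec_eq_zero_iff.mpr hdet0
      have hpos := hMP.dotProduct_mulVec_pos hv
      have hvS : v ᵥ* S = 0 := by rw [← hSs, Matrix.vecMul_transpose, hv0]
      have hzero : star v ⬝ᵥ (M + P) *ᵥ v = 0 := by
        rw [star_trivial, ← hSeq, Matrix.add_mulVec, dotProduct_add]
        have t1 : v ⬝ᵥ (S * D) *ᵥ v = 0 := by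
          rw [← Matrix.mulVec_mulVec, Matrix.dotProduct_mulVec, hvS, zero_dotProduct]
        have t2 : v ⬝ᵥ (Dᵀ * S) *ᵥ v = 0 := by
          rw [← Matrix.mulVec_mulVec, hv0, Matrix.mulVec_zero, dotProduct_zero]
        rw [t1, t2, add_zero]
      rw [hzero] at hpos
      exact lt_irrefl 0 hpos
    have hSinvT : (S⁻¹)ᵀ = S⁻¹ := by rw [Matrix.transpose_nonsing_inv, hSs]
    refine ⟨hSdet, hSinvT, ?_⟩
    have hiYL : S⁻¹ * S = 1 := Matrix.nonsing_inv_mul _ hSdet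
    have hiLY : S * S⁻¹ = 1 := Matrix.mul_nonsing_inv _ hSdet
    have hP' : S * D + Dᵀ * S - M = P := by rw [hSeq]; exact add_sub_cancel_left M P
    have hform : D * S⁻¹ + S⁻¹ * Dᵀ - S⁻¹ * M * S⁻¹ = (S⁻¹)ᵀ * P * S⁻¹ := by
      rw [hSinvT, ← hP']
      calc D * S⁻¹ + S⁻¹ * Dᵀ - S⁻¹ * M * S⁻¹
          = (S⁻¹ * S) * D * S⁻¹ + S⁻¹ * Dᵀ * (S * S⁻¹) - S⁻¹ * M * S⁻¹ := by
            rw [hiYL, hiLY, one_mul, mul_one]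
        _ = S⁻¹ * (S * D + Dᵀ * S - M) * S⁻¹ := by noncomm_ring
    rw [hform]
    exact posdef_conj hP (Matrix.isUnit_nonsing_inv_det _ hSdet)
  · intro Lhat hs hinv hpos
    have hLL : Lhat⁻¹ * Lhat = 1 := Matrix.nonsing_inv_mul _ hinv
    have hLL' : Lhat * Lhat⁻¹ = 1 := Matrix.mul_nonsing_inv _ hinv
    have hts : (Lhat⁻¹)ᵀ = Lhat⁻¹ := by rw [Matrix.transpose_nonsing_inv, hs.eq]
    set Δ := Lhat⁻¹ - Lstar⁻¹ with hΔdef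
    set P := Δ * D + Dᵀ * Δ with hPdef
    have hform : P = (Lhat⁻¹)ᵀ * (D * Lhat + Lhat * Dᵀ - Lhat * M * Lhat) * Lhat⁻¹ := by
      rw [hts]
      calc P = Lhat⁻¹ * D + Dᵀ * Lhat⁻¹ - (Lstar⁻¹ * D + Dᵀ * Lstar⁻¹) := by
            rw [hPdef, hΔdef]; noncomm_ring
        _ = Lhat⁻¹ * D + Dᵀ * Lhat⁻¹ - M := by rw [hYM]
        _ = (Lhat⁻¹ * D) * (Lhat * Lhat⁻¹) + (Lhat⁻¹ * Lhat) * (Dᵀ * Lhat⁻¹)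
            - (Lhat⁻¹ * Lhat) * M * (Lhat * Lhat⁻¹) := by
            rw [hLL, hLL', one_mul, mul_one, one_mul, mul_one]
        _ = Lhat⁻¹ * (D * Lhat + Lhat * Dᵀ - Lhat * M * Lhat) * Lhat⁻¹ := by noncomm_ring
    have hPpos : P.PosDef := by
      rw [hform]
      exact posdef_conj hpos (Matrix.isUnit_nonsing_inv_det _ hinv)
    have hYΔ : Lstar⁻¹ + Δ = Lhat⁻¹ := by rw [hΔdef]; abel
    refine ⟨P, ⟨hPpos, Δ, rfl, ?_⟩, ?_⟩
    · rw [hYΔ, Matrix.nonsing_inv_nonsing_inv _ hinv]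
    · rintro P' ⟨hP', Δ', hΔ'eq, hLhat'⟩
      by_cases hu : IsUnit (Lstar⁻¹ + Δ').det
      · have h4 : Lstar⁻¹ + Δ' = Lhat⁻¹ := by
          conv_rhs => rw [hLhat']
          rw [Matrix.nonsing_inv_nonsing_inv _ hu]
        have h5 : Δ' = Δ := by rw [hΔdef, ← h4]; abel
        rw [← hΔ'eq, h5, hPdef]
      · have h0 : Lhat = 0 := by rw [hLhat', Matrix.nonsing_inv_apply_not_isUnit _ hu]
        have h01 : (0 : Matrix (Fin k) (Fin k) ℝ) = 1 := by
          have hu2 := (Matrix.isUnit_iff_isUnit_det Lhat).mpr hinv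
          rw [h0] at hu2
          exact isUnit_zero_iff.mp hu2
        have := subsingleton_of_zero_eq_one h01
        exact Subsingleton.elim _ _
end

section
/- Let A₀ ∈ ℝⁿˣⁿ, B ∈ ℝⁿˣᵐ, v a unit vector with A₀ᵀv = λv, λ ∈ ℝ, λ ≠ 0, and Bᵀv ≠ 0 (controllable mode). Then X* = (2λ/‖Bᵀv‖²) vvᵀ is a symmetric solution of -A₀ᵀX - XA₀ + XBBᵀX = 0, and A₁ᵀ = (A₀ - BBᵀX*)ᵀ satisfies A₁ᵀv = -λv, i.e., the eigenvalue λ of A₀ is reflected to -λ in A₁ along the same eigenvector of the transpose. -/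
open Matrix

lemma mul_vecMulVec {n k : ℕ} (M : Matrix (Fin k) (Fin n) ℝ) (v w : Fin n → ℝ) :
    M * vecMulVec v w = vecMulVec (M.mulVec v) w := by
  ext i j
  simp only [Matrix.mul_apply, vecMulVec_apply, mulVec, dotProduct, Finset.sum_mul]
  exact Finset.sum_congr rfl fun x _ => by ring

lemma vecMulVec_mul {n k : ℕ} (M : Matrix (Fin n) (Fin k) ℝ) (v w : Fin n → ℝ) :
    vecMulVec v w * M = vecMulVec v (Mᵀ.mulVec w) := by
  ext i j
  simp only [Matrix.mul_apply, vecMulVec_apply, mulVec, dotProduct, Finset.mul_sum,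
    transpose_apply]
  exact Finset.sum_congr rfl fun x _ => by ring

theorem stmt18 {n m : ℕ} (A₀ : Matrix (Fin n) (Fin n) ℝ) (B : Matrix (Fin n) (Fin m) ℝ)
    (v : Fin n → ℝ) (hv : v ⬝ᵥ v = 1) (lam : ℝ) (hlam : lam ≠ 0)
    (heig : A₀ᵀ.mulVec v = lam • v) (hBv : Bᵀ.mulVec v ≠ 0) :
    let Xs : Matrix (Fin n) (Fin n) ℝ :=
      (2 * lam / (v ⬝ᵥ (B * Bᵀ).mulVec v)) • vecMulVec v v
    Xs.IsSymm ∧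
    (-(A₀ᵀ * Xs) - Xs * A₀ + Xs * (B * Bᵀ) * Xs = 0) ∧
    ((A₀ - B * Bᵀ * Xs)ᵀ.mulVec v = (-lam) • v) := by
  intro Xs
  set s := v ⬝ᵥ (B * Bᵀ).mulVec v with hs
  have hsval : s = (Bᵀ.mulVec v) ⬝ᵥ (Bᵀ.mulVec v) := by
    rw [hs, ← Matrix.mulVec_mulVec, dotProduct_mulVec, ← Matrix.mulVec_transpose]
  have hspos : 0 < s := by
    rw [hsval]
    have hnn : 0 ≤ (Bᵀ.mulVec v) ⬝ᵥ (Bᵀ.mulVec v) :=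
      Finset.sum_nonneg fun i _ => mul_self_nonneg _
    rcases lt_or_eq_of_le hnn with h | h
    · exact h
    · exact absurd (dotProduct_self_eq_zero.mp h.symm) hBv
  have hsne : s ≠ 0 := ne_of_gt hspos
  set c := 2 * lam / s with hc
  have hXs : Xs = c • vecMulVec v v := rfl
  have h1 : A₀ᵀ * vecMulVec v v = lam • vecMulVec v v := by
    rw [_root_.mul_vecMulVec, heig]
    ext i j; simp [vecMulVec_apply, mul_assoc]
  have h2 : vecMulVec v v * A₀ = lam • vecMulVec v v := by
    rw [_root_.vecMulVec_mul, heig]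
    ext i j; simp [vecMulVec_apply]; ring
  have h3 : vecMulVec v v * (B * Bᵀ) * vecMulVec v v = s • vecMulVec v v := by
    rw [_root_.vecMulVec_mul, _root_.mul_vecMulVec, vecMulVec_mulVec']
    rw [Matrix.transpose_mul, transpose_transpose, dotProduct_comm, ← hs]
    ext i j
    simp only [vecMulVec_apply, Matrix.smul_apply, Pi.smul_apply, smul_eq_mul]
    ring
  have hsymm : Xs.IsSymm := by
    rw [hXs]
    apply Matrix.IsSymm.smul
    ext i j; simp [transpose_apply, vecMulVec_apply, mul_comm]
  refine ⟨hsymm, ?_, ?_⟩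
  · rw [hXs, Matrix.mul_smul, Matrix.smul_mul, Matrix.smul_mul, Matrix.mul_smul,
      Matrix.smul_mul, smul_smul, h1, h2, h3]
    have hco : -(c * lam) - c * lam + c * c * s = 0 := by
      rw [hc]; field_simp; ring
    have hz : (-(c * lam) - c * lam + c * c * s) • vecMulVec v v = 0 := by
      rw [hco, zero_smul]
    rw [← hz]; module
  · have hx : (B * Bᵀ * Xs)ᵀ = Xs * (B * Bᵀ) := by
      rw [Matrix.transpose_mul, hsymm.eq, Matrix.transpose_mul, transpose_transpose]
    rw [Matrix.transpose_sub, Matrix.sub_mulVec, heig, hx, hXs, Matrix.smul_mul,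
      smul_mulVec, _root_.vecMulVec_mul, vecMulVec_mulVec']
    have hd : ((B * Bᵀ)ᵀ.mulVec v) ⬝ᵥ v = s := by
      rw [Matrix.transpose_mul, transpose_transpose, dotProduct_comm, ← hs]
    rw [hd, smul_smul, hc]
    have h2l : 2 * lam / s * s = 2 * lam := by field_simp
    rw [h2l]
    module
end
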